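/- arXiv:2407.19344 — 9 statements merged into one kernel-verified Lean document; each statement's English description precedes it below -/
import Mathlib

section
/- The number of dominating sets of any finite graph is odd. -/
/-- `S` is a dominating set: every vertex is in `S` or adjacent to a member of `S`. -/
def IsDomSet {V : Type*} (G : SimpleGraph V) (S : Finset V) : Prop :=
  ∀ v, v ∈ S ∨ ∃ u ∈ S, G.Adj u v

instance {V : Type*} [Fintype V] [DecidableEq V] (G : SimpleGraph V)
    [DecidableRel G.Adj] : DecidablePred (IsDomSet G) :=
  fun _ => inferInstanceAs (Decidable (∀ _, _ ∨ _))

section Aux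

variable {V : Type*} [Fintype V] [DecidableEq V] (G : SimpleGraph V) [DecidableRel G.Adj]

/-- The set of vertices not dominated by `X`. -/
def perpSet (X : Finset V) : Finset V :=
  Finset.univ.filter fun v => ∀ u ∈ X, ¬(u = v ∨ G.Adj u v)

lemma mem_perpSet {X : Finset V} {v : V} :
    v ∈ perpSet G X ↔ ∀ u ∈ X, ¬(u = v ∨ G.Adj u v) := by
  simp [perpSet]

lemma subset_perpSet_comm {X Y : Finset V} :
    Y ⊆ perpSet G X ↔ X ⊆ perpSet G Y := by
  simp only [Finset.subset_iff, mem_perpSet]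
  constructor <;>
  · intro h a ha u hu hc
    exact h hu a ha (hc.imp Eq.symm fun h2 => h2.symm)

lemma perpSet_eq_empty_iff {X : Finset V} :
    perpSet G X = ∅ ↔ IsDomSet G X := by
  simp only [Finset.eq_empty_iff_forall_notMem, mem_perpSet, IsDomSet]
  push_neg
  constructor
  · intro h v
    obtain ⟨u, hu, hc⟩ := h v
    rcases hc with rfl | ha
    · exact Or.inl hu
    · exact Or.inr ⟨u, hu, ha⟩
  · intro h v
    rcases h v with hv | ⟨u, hu, ha⟩
    · exact ⟨v, hv, Or.inl rfl⟩
    · exact ⟨u, hu, Or.inr ha⟩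

lemma subset_perpSet_self_iff {X : Finset V} :
    X ⊆ perpSet G X ↔ X = ∅ := by
  constructor
  · intro h
    rw [Finset.eq_empty_iff_forall_notMem]
    intro x hx
    exact (mem_perpSet G).1 (h hx) x hx (Or.inl rfl)
  · rintro rfl
    simp

end Aux

/-- The number of dominating sets of any finite graph is odd
(Brouwer–Csorba–Schrijver). -/
theorem card_dominating_sets_odd {V : Type*} [Fintype V] [DecidableEq V]
    (G : SimpleGraph V) [DecidableRel G.Adj] :
    Odd (Finset.univ.filter (IsDomSet G)).card := by
  classical
  set F : Finset V × Finset V → ZMod 2 :=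
    fun p => if p.2 ⊆ perpSet G p.1 then 1 else 0 with hF
  have hFsymm : ∀ p : Finset V × Finset V, F p.swap = F p := by
    intro p
    simp only [hF, Prod.fst_swap, Prod.snd_swap]
    exact if_congr (subset_perpSet_comm G) rfl rfl
  -- the full sum equals the diagonal sum
  have hsplit :
      (∑ p : Finset V × Finset V, F p)
        = ∑ p ∈ Finset.univ.filter (fun p : Finset V × Finset V => p.1 = p.2), F p := by
    rw [← Finset.sum_filter_add_sum_filter_not Finset.univ
      (fun p : Finset V × Finset V => p.1 = p.2) F]
    have hoff :
        (∑ p ∈ Finset.univ.filter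
          (fun p : Finset V × Finset V => ¬p.1 = p.2), F p) = 0 := by
      refine Finset.sum_involution (fun p _ => p.swap) ?_ ?_ ?_ ?_
      · intro p _
        show F p + F p.swap = 0
        rw [hFsymm p]
        simp only [hF]
        split_ifs <;> decide
      · intro p hp _ h
        apply (Finset.mem_filter.1 hp).2
        have h2 : p.swap = p := h
        have h3 : p.2 = p.1 := congrArg Prod.fst h2
        exact h3.symm
      · intro p hp
        simp only [Finset.mem_filter, Finset.mem_univ, true_and] at hp ⊢
        intro h
        exact hp h.symm
      · intro p _
        simp
    rw [hoff, add_zero]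
  -- the diagonal sum equals 1
  have hdiag :
      (∑ p ∈ Finset.univ.filter (fun p : Finset V × Finset V => p.1 = p.2), F p) = 1 := by
    rw [Finset.sum_filter]
    rw [Fintype.sum_prod_type]
    have : ∀ X : Finset V, (∑ Y : Finset V, if X = Y then F (X, Y) else 0)
        = if X = ∅ then 1 else 0 := by
      intro X
      rw [Finset.sum_ite_eq Finset.univ X (fun Y => F (X, Y))]
      simp only [Finset.mem_univ, if_true, hF]
      exact if_congr (subset_perpSet_self_iff G) rfl rfl
    rw [Finset.sum_congr rfl fun X _ => this X]
    simp
  -- the full sum equals the number of dominating sets mod 2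
  have hcount : (∑ p : Finset V × Finset V, F p)
      = ((Finset.univ.filter (IsDomSet G)).card : ZMod 2) := by
    rw [Fintype.sum_prod_type]
    have step1 : ∀ X : Finset V, (∑ Y : Finset V, F (X, Y))
        = (if IsDomSet G X then (1 : ZMod 2) else 0) := by
      intro X
      have h1 : (∑ Y : Finset V, F (X, Y))
          = (((Finset.univ.filter (fun Y : Finset V => Y ⊆ perpSet G X)).card : ℕ) : ZMod 2) := by
        simp only [hF]
        exact Finset.sum_boole _ _
      have h2 : Finset.univ.filter (fun Y : Finset V => Y ⊆ perpSet G X)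
          = (perpSet G X).powerset := by
        ext Y; simp [Finset.mem_powerset]
      rw [h1, h2, Finset.card_powerset]
      push_cast
      have h3 : ((2 : ZMod 2)) = 0 := by decide
      rw [h3, zero_pow_eq]
      exact if_congr (Finset.card_eq_zero.trans (perpSet_eq_empty_iff G)) rfl rfl
    rw [Finset.sum_congr rfl fun X _ => step1 X]
    exact Finset.sum_boole _ _
  have hone : ((Finset.univ.filter (IsDomSet G)).card : ZMod 2) = 1 := by
    rw [← hcount, hsplit, hdiag]
  rcases Nat.even_or_odd (Finset.univ.filter (IsDomSet G)).card with he | ho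
  · exfalso
    have h0 : ((Finset.univ.filter (IsDomSet G)).card : ZMod 2) = 0 :=
      (ZMod.natCast_eq_zero_iff _ _).2 he.two_dvd
    rw [h0] at hone
    exact absurd hone (by decide)
  · exact ho
end

section
/- For the path graph P_n on n ≥ 1 vertices, the number of dominating sets of even size minus the number of dominating sets of odd size equals (-1)^{⌈n/2⌉}. -/
/-- The path graph on `n` vertices `{1, ..., n}` (vertex `i : Fin n`
represents `i.val + 1`), with `i` adjacent to `j` iff `|i - j| = 1`. -/
def pathGraph' (n : ℕ) : SimpleGraph (Fin n) where
  Adj i j := ((i.val : ℤ) - j.val).natAbs = 1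
  symm := by
    constructor
    intro i j h
    rw [show ((j.val : ℤ) - i.val) = -((i.val : ℤ) - j.val) by ring, Int.natAbs_neg]
    exact h
  loopless := by constructor; intro i h; simp at h

instance (n : ℕ) : DecidableRel (pathGraph' n).Adj :=
  fun i j => decidable_of_iff (((i.val : ℤ) - j.val).natAbs = 1) Iff.rfl

/-!
Write the difference as the signed sum `∑ (-1)^|S|` over dominating sets `S`. On `n + 2`
vertices `0, …, n + 1`, split by membership of the last two. A set containing neither leaves
`n + 1` undominated. Among sets containing `n`, toggling `n + 1` preserves domination and flips
the sign, so they cancel. The sets containing `n + 1` but not `n` are `T ∪ {n + 1}` with `T`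
dominating the first `n` vertices. Hence the signed sum satisfies `d (n + 2) = -d n`, with
`d 0 = 1` and `d 1 = -1`.
-/

open Finset

theorem Finset.card_filter_even_sub_card_filter_odd_eq_sum {α : Type*} (s : Finset α)
    (p : α → Prop) [DecidablePred p] (f : α → ℕ) :
    (#{x ∈ s | p x ∧ Even (f x)} : ℤ) - #{x ∈ s | p x ∧ Odd (f x)} =
      ∑ x ∈ s, if p x then (-1) ^ f x else 0 := by
  push_cast [card_filter]
  rw [← sum_sub_distrib]
  refine sum_congr rfl fun x _ => ?_
  rcases Nat.even_or_odd (f x) with h | h <;>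
    by_cases p x <;> simp [*, h.neg_one_pow, Nat.not_odd_iff_even, Nat.not_even_iff_odd]

/-- Vertices of `pathGraph' n` are read as natural numbers, so that the path grows by `insert`. -/
def DominatesRange (n : ℕ) (S : Finset ℕ) : Prop :=
  ∀ v < n, v ∈ S ∨ ∃ u ∈ S, ((u : ℤ) - v).natAbs = 1

instance (n : ℕ) : DecidablePred (DominatesRange n) :=
  fun _ => inferInstanceAs (Decidable (∀ v < n, _))

theorem isDomSet_pathGraph'_iff {n : ℕ} (S : Finset (Fin n)) :
    IsDomSet (pathGraph' n) S ↔ DominatesRange n (S.image Fin.val) := by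
  simp only [IsDomSet, DominatesRange, pathGraph', Fin.forall_iff, mem_image,
    exists_exists_and_eq_and]
  refine forall₂_congr fun i hi => or_congr_left ⟨fun h => ⟨_, h, rfl⟩, ?_⟩
  rintro ⟨a, ha, rfl⟩
  exact ha

section

variable {n : ℕ} {S T : Finset ℕ}

theorem DominatesRange.mono (h : DominatesRange n S) (hST : S ⊆ T) : DominatesRange n T :=
  fun v hv => (h v hv).imp (@hST v) fun ⟨u, hu, huv⟩ => ⟨u, hST hu, huv⟩

theorem not_dominatesRange_add_two (hT : T ⊆ range n) : ¬ DominatesRange (n + 2) T := by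
  intro h
  rcases h (n + 1) (by omega) with hmem | ⟨u, hu, huv⟩
  · have := mem_range.1 (hT hmem); omega
  · have := mem_range.1 (hT hu); omega

theorem dominatesRange_insert_add_one_iff (hS : n ∈ S) :
    DominatesRange (n + 2) (insert (n + 1) S) ↔ DominatesRange (n + 2) S := by
  refine ⟨fun h v hv => ?_, fun h => h.mono (subset_insert _ _)⟩
  obtain h | ⟨u, hu, huv⟩ := h v hv
  · obtain rfl | h := mem_insert.1 h
    · exact Or.inr ⟨n, hS, by omega⟩
    · exact Or.inl h
  · obtain rfl | hu := mem_insert.1 hu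
    · exact Or.inl (by convert hS; omega)
    · exact Or.inr ⟨u, hu, huv⟩

theorem dominatesRange_add_two_insert_iff :
    DominatesRange (n + 2) (insert (n + 1) T) ↔ DominatesRange n T := by
  constructor
  · intro h v hv
    obtain h | ⟨u, hu, huv⟩ := h v (by omega)
    · exact Or.inl ((mem_insert.1 h).resolve_left (by omega))
    · exact Or.inr ⟨u, (mem_insert.1 hu).resolve_left (by omega), huv⟩
  · intro h v hv
    rcases lt_or_ge v n with hvn | hvn
    · exact h.mono (subset_insert _ _) v hvn
    · obtain rfl | rfl : v = n ∨ v = n + 1 := by omega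
      · exact Or.inr ⟨v + 1, mem_insert_self _ _, by omega⟩
      · exact Or.inl (mem_insert_self _ _)

end

def pathDomSignedSum (n : ℕ) : ℤ :=
  ∑ S ∈ (range n).powerset, if DominatesRange n S then (-1) ^ #S else 0

theorem pathDomSignedSum_add_two (n : ℕ) : pathDomSignedSum (n + 2) = -pathDomSignedSum n := by
  have hn : n ∉ range n := by simp
  have hn1 : n + 1 ∉ insert n (range n) := by simp
  rw [pathDomSignedSum, pathDomSignedSum, range_add_one, range_add_one,
    sum_powerset_insert hn1, sum_powerset_insert hn, sum_powerset_insert hn,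
    ← sum_neg_distrib, ← sum_add_distrib, ← sum_add_distrib, ← sum_add_distrib]
  refine sum_congr rfl fun T hT => ?_
  have hT := mem_powerset.1 hT
  have hnT : n ∉ T := fun h => hn (hT h)
  have hn1T : n + 1 ∉ insert n T := fun h => hn1 (insert_subset_insert n hT h)
  simp only [if_neg (not_dominatesRange_add_two hT),
    dominatesRange_insert_add_one_iff (mem_insert_self n T), dominatesRange_add_two_insert_iff,
    card_insert_of_notMem hn1T, card_insert_of_notMem hnT,
    card_insert_of_notMem (fun h => hn1T (mem_insert_of_mem h))]
  split_ifs <;> ring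

theorem pathDomSignedSum_eq (n : ℕ) : pathDomSignedSum n = (-1) ^ ((n + 1) / 2) := by
  induction n using Nat.twoStepInduction with
  | zero => decide
  | one => decide
  | more n ih _ =>
    rw [pathDomSignedSum_add_two, ih, show (n + 2 + 1) / 2 = (n + 1) / 2 + 1 by omega, pow_succ]
    ring

theorem sum_isDomSet_pathGraph' (n : ℕ) :
    ∑ S : Finset (Fin n), (if IsDomSet (pathGraph' n) S then (-1 : ℤ) ^ #S else 0) =
      pathDomSignedSum n := by
  rw [pathDomSignedSum, ← Nat.Iio_eq_range, ← Fin.map_valEmbedding_univ, map_eq_image,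
    Fin.valEmbedding_apply, powerset_image,
    sum_image (image_injOn_powerset_of_injOn Fin.val_injective.injOn), powerset_univ]
  simp_rw [isDomSet_pathGraph'_iff, card_image_of_injective _ Fin.val_injective]

theorem path_domination_poly_at_neg_one_general (n : ℕ) :
    ((Finset.univ.filter (fun S => IsDomSet (pathGraph' n) S ∧ Even S.card)).card : ℤ) -
      ((Finset.univ.filter (fun S => IsDomSet (pathGraph' n) S ∧ Odd S.card)).card : ℤ) =
      (-1 : ℤ) ^ ((n + 1) / 2) := by
  rw [card_filter_even_sub_card_filter_odd_eq_sum, sum_isDomSet_pathGraph', pathDomSignedSum_eq]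

/-- For the path graph on `n ≥ 1` vertices, the number of dominating sets of even
size minus the number of odd size equals `(-1)^⌈n/2⌉`. -/
theorem path_domination_poly_at_neg_one (n : ℕ) (hn : 1 ≤ n) :
    ((Finset.univ.filter (fun S => IsDomSet (pathGraph' n) S ∧ Even S.card)).card : ℤ) -
      ((Finset.univ.filter (fun S => IsDomSet (pathGraph' n) S ∧ Odd S.card)).card : ℤ) =
      (-1 : ℤ) ^ ((n + 1) / 2) :=
  path_domination_poly_at_neg_one_general n
end

section
/- For the m×n king graph, the domination polynomial evaluated at -1 equals (-1)^{⌈m/2⌉·⌈n/2⌉}. Equivalently, the number of even-size dominating sets and odd-size dominating sets differ by exactly 1. -/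
/-- The `m × n` king graph: vertices are squares of an `m × n` board
(vertex `p` represents board square `(p.1.val + 1, p.2.val + 1)`), with
`p` adjacent to `q` iff `p ≠ q` and `max |x−x'| |y−y'| = 1`. -/
def kingGraph (m n : ℕ) : SimpleGraph (Fin m × Fin n) where
  Adj p q := p ≠ q ∧
    max ((p.1.val : ℤ) - q.1.val).natAbs ((p.2.val : ℤ) - q.2.val).natAbs = 1
  symm := by
    constructor
    intro p q ⟨h1, h2⟩
    refine ⟨h1.symm, ?_⟩
    rw [show ((q.1.val : ℤ) - p.1.val) = -((p.1.val : ℤ) - q.1.val) by ring,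
      show ((q.2.val : ℤ) - p.2.val) = -((p.2.val : ℤ) - q.2.val) by ring,
      Int.natAbs_neg, Int.natAbs_neg]
    exact h2
  loopless := by constructor; intro p ⟨h1, _⟩; exact h1 rfl

instance (m n : ℕ) : DecidableRel (kingGraph m n).Adj :=
  fun p q => decidable_of_iff (p ≠ q ∧
    max ((p.1.val : ℤ) - q.1.val).natAbs ((p.2.val : ℤ) - q.2.val).natAbs = 1) Iff.rfl

/-! If the closed neighbourhood `N[c]` of a vertex `c` is a clique, toggling `c` is a
sign-reversing involution on the dominating sets `S` with `S ∩ N[c] ≠ {c}`; the remaining ones are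
`insert c T` with `T` dominating `G - N[c]`, so `D(G, -1) = -D(G - N[c], -1)`. Take for `U` the
first `k` rows of the board with the last `2t` columns of rows `k - 2` and `k - 1` removed: the
bottom-right cell of `U` has as closed neighbourhood in `U` a block of at most `2 × 2` cells, which
is a clique of the king graph, and removing it passes from `t` to `t + 1`. After `⌈n/2⌉` steps two
full rows are gone, which gives `D(K_{k×n}, -1) = (-1)^⌈n/2⌉ D(K_{(k-2)×n}, -1)`. -/

open Finset

namespace SimpleGraph

variable {V : Type*} (G : SimpleGraph V)

def Dominates (S U : Finset V) : Prop :=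
  ∀ v ∈ U, v ∈ S ∨ ∃ u ∈ S, G.Adj u v

variable {G} in
theorem Dominates.mono {S T U : Finset V} (hS : G.Dominates S U) (hST : S ⊆ T) :
    G.Dominates T U := fun v hv =>
  (hS v hv).imp (fun h => hST h) fun ⟨u, hu, huv⟩ => ⟨u, hST hu, huv⟩

variable [DecidableEq V] [DecidableRel G.Adj]

instance (S U : Finset V) : Decidable (G.Dominates S U) :=
  inferInstanceAs (Decidable (∀ v ∈ U, _))

/-- The domination polynomial of the induced subgraph `G[U]` evaluated at `-1`. -/
def signedDomSum (U : Finset V) : ℤ :=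
  ∑ S ∈ U.powerset with G.Dominates S U, (-1) ^ #S

theorem signedDomSum_empty : G.signedDomSum ∅ = 1 := by
  simp [signedDomSum, Dominates]

variable [Fintype V]

theorem signedDomSum_univ :
    G.signedDomSum univ = ∑ S ∈ univ.filter (IsDomSet G), (-1 : ℤ) ^ #S := by
  rw [signedDomSum, powerset_univ]
  congr 1
  ext S
  simp [Dominates, IsDomSet]

def closedNeighborFinset (c : V) : Finset V := insert c (G.neighborFinset c)

variable {G}

theorem mem_closedNeighborFinset {c v : V} :
    v ∈ G.closedNeighborFinset c ↔ v = c ∨ G.Adj c v := by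
  simp [closedNeighborFinset]

theorem self_mem_closedNeighborFinset (c : V) : c ∈ G.closedNeighborFinset c :=
  mem_closedNeighborFinset.2 (.inl rfl)

theorem Dominates.erase_of_isClique {S U : Finset V} {c x : V} (hS : G.Dominates S U)
    (hK : G.IsClique (↑(U ∩ G.closedNeighborFinset c) : Set V))
    (hxS : x ∈ S) (hxK : x ∈ U ∩ G.closedNeighborFinset c) (hxc : x ≠ c) :
    G.Dominates (S.erase c) U := by
  intro v hv
  by_cases hvK : v ∈ U ∩ G.closedNeighborFinset c
  · by_cases hxv : x = v
    · exact .inl (mem_erase.2 ⟨hxv ▸ hxc, hxv ▸ hxS⟩)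
    · exact .inr ⟨x, mem_erase.2 ⟨hxc, hxS⟩, hK hxK hvK hxv⟩
  · have hvc : v ≠ c ∧ ¬G.Adj c v := by simpa [mem_closedNeighborFinset, hv] using hvK
    rcases hS v hv with hvS | ⟨u, huS, huv⟩
    · exact .inl (mem_erase.2 ⟨hvc.1, hvS⟩)
    · exact .inr ⟨u, mem_erase.2 ⟨by rintro rfl; exact hvc.2 huv, huS⟩, huv⟩

theorem signedDomSum_eq_sum_inter_eq_singleton {U : Finset V} {c : V} (hc : c ∈ U)
    (hK : G.IsClique (↑(U ∩ G.closedNeighborFinset c) : Set V)) :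
    G.signedDomSum U = ∑ S ∈ U.powerset with
      G.Dominates S U ∧ S ∩ G.closedNeighborFinset c = {c}, (-1) ^ #S := by
  set N := G.closedNeighborFinset c
  rw [signedDomSum, ← sum_filter_add_sum_filter_not _ (fun S => S ∩ N = {c}), filter_filter,
    add_eq_left]
  refine sum_involution (fun S _ => if c ∈ S then S.erase c else insert c S) ?_ ?_ ?_ ?_
  · intro S _
    split_ifs with hcS
    · rw [← card_erase_add_one hcS, pow_succ]; ring
    · rw [card_insert_of_notMem hcS, pow_succ]; ring
  · intro S _ _
    split_ifs with hcS
    · exact fun h => notMem_erase c S (by rwa [h])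
    · exact fun h => hcS (by rw [← h]; exact mem_insert_self c S)
  · intro S hS
    simp only [mem_filter, mem_powerset] at hS ⊢
    obtain ⟨⟨hSU, hdom⟩, hSN⟩ := hS
    split_ifs with hcS
    · obtain ⟨x, hxSN, hxc⟩ : ∃ x ∈ S ∩ N, x ≠ c := by
        by_contra! h
        exact hSN (eq_singleton_iff_unique_mem.2
          ⟨mem_inter.2 ⟨hcS, self_mem_closedNeighborFinset c⟩, h⟩)
      obtain ⟨hxS, hxN⟩ := mem_inter.1 hxSN
      refine ⟨⟨(erase_subset c S).trans hSU,
        hdom.erase_of_isClique hK hxS (mem_inter.2 ⟨hSU hxS, hxN⟩) hxc⟩, fun h => ?_⟩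
      have hcSN : c ∈ S.erase c ∩ N := by rw [h]; exact mem_singleton_self c
      exact notMem_erase c S (mem_inter.1 hcSN).1
    · obtain ⟨u, huS, huc⟩ := (hdom c hc).resolve_left hcS
      refine ⟨⟨insert_subset hc hSU, hdom.mono (subset_insert c S)⟩, fun h => huc.ne ?_⟩
      rw [← mem_singleton, ← h]
      exact mem_inter.2 ⟨mem_insert_of_mem huS, mem_closedNeighborFinset.2 (.inr huc.symm)⟩
  · intro S _
    split_ifs <;> simp_all

theorem signedDomSum_eq_neg_of_isClique {U : Finset V} {c : V} (hc : c ∈ U)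
    (hK : G.IsClique (↑(U ∩ G.closedNeighborFinset c) : Set V)) :
    G.signedDomSum U = -G.signedDomSum (U \ G.closedNeighborFinset c) := by
  set N := G.closedNeighborFinset c
  have hcN : c ∈ N := self_mem_closedNeighborFinset c
  rw [signedDomSum_eq_sum_inter_eq_singleton hc hK, signedDomSum, ← sum_neg_distrib]
  have hcS {S : Finset V} (hSN : S ∩ N = {c}) : c ∈ S :=
    (mem_inter.1 (hSN ▸ mem_singleton_self c)).1
  refine sum_nbij' (·.erase c) (insert c) ?_ ?_ ?_ ?_ ?_
  · intro S hS
    simp only [mem_filter, mem_powerset] at hS ⊢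
    obtain ⟨hSU, hdom, hSN⟩ := hS
    have hSN' {x : V} (hxS : x ∈ S) (hxN : x ∈ N) : x = c :=
      mem_singleton.1 (hSN ▸ mem_inter.2 ⟨hxS, hxN⟩)
    refine ⟨fun x hx => ?_, fun v hv => ?_⟩
    · obtain ⟨hxc, hxS⟩ := mem_erase.1 hx
      exact mem_sdiff.2 ⟨hSU hxS, fun hxN => hxc (hSN' hxS hxN)⟩
    · obtain ⟨hvU, hvN⟩ := mem_sdiff.1 hv
      rw [mem_closedNeighborFinset, not_or] at hvN
      rcases hdom v hvU with hvS | ⟨u, huS, huv⟩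
      · exact .inl (mem_erase.2 ⟨hvN.1, hvS⟩)
      · exact .inr ⟨u, mem_erase.2 ⟨by rintro rfl; exact hvN.2 huv, huS⟩, huv⟩
  · intro T hT
    simp only [mem_filter, mem_powerset] at hT ⊢
    obtain ⟨hTU, hdom⟩ := hT
    refine ⟨insert_subset hc (hTU.trans sdiff_subset), fun v hv => ?_, ?_⟩
    · by_cases hvN : v ∈ N
      · rcases mem_closedNeighborFinset.1 hvN with rfl | hcv
        · exact .inl (mem_insert_self v T)
        · exact .inr ⟨c, mem_insert_self c T, hcv⟩
      · exact (hdom v (mem_sdiff.2 ⟨hv, hvN⟩)).imp (mem_insert_of_mem ·)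
          fun ⟨u, hu, huv⟩ => ⟨u, mem_insert_of_mem hu, huv⟩
    · rw [insert_inter_of_mem hcN, disjoint_iff_inter_eq_empty.1
        (disjoint_of_subset_left hTU sdiff_disjoint), insert_empty]
  · intro S hS
    exact insert_erase (hcS (mem_filter.1 hS).2.2)
  · intro T hT
    exact erase_insert fun hcT => (mem_sdiff.1 ((mem_powerset.1 (mem_filter.1 hT).1) hcT)).2 hcN
  · intro S hS
    rw [← card_erase_add_one (hcS (mem_filter.1 hS).2.2), pow_succ]
    ring

end SimpleGraph

section KingGraph

open SimpleGraph

variable {m n : ℕ}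

theorem kingGraph_adj_iff {p q : Fin m × Fin n} :
    (kingGraph m n).Adj p q ↔ p ≠ q ∧ (p.1 : ℕ) ≤ q.1 + 1 ∧ (q.1 : ℕ) ≤ p.1 + 1 ∧
      (p.2 : ℕ) ≤ q.2 + 1 ∧ (q.2 : ℕ) ≤ p.2 + 1 := by
  change (p ≠ q ∧ _) ↔ _
  simp only [Ne, Prod.ext_iff, Fin.ext_iff]
  omega

theorem kingGraph_mem_closedNeighborFinset {c v : Fin m × Fin n} :
    v ∈ (kingGraph m n).closedNeighborFinset c ↔ (c.1 : ℕ) ≤ v.1 + 1 ∧ (v.1 : ℕ) ≤ c.1 + 1 ∧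
      (c.2 : ℕ) ≤ v.2 + 1 ∧ (v.2 : ℕ) ≤ c.2 + 1 := by
  rw [mem_closedNeighborFinset, kingGraph_adj_iff]
  simp only [Ne, Prod.ext_iff, Fin.ext_iff]
  omega

variable (m n) in
def kingRegion (k t : ℕ) : Finset (Fin m × Fin n) :=
  univ.filter fun v => v.1 + 2 < k ∨ (v.1 < k ∧ v.2 + 2 * t < n)

theorem signedDomSum_kingRegion_succ {k t : ℕ} (hk : 1 ≤ k) (hkm : k ≤ m) (ht : 2 * t < n) :
    (kingGraph m n).signedDomSum (kingRegion m n k t) =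
      -(kingGraph m n).signedDomSum (kingRegion m n k (t + 1)) := by
  set c : Fin m × Fin n := (⟨k - 1, by omega⟩, ⟨n - 2 * t - 1, by omega⟩)
  have hc : c ∈ kingRegion m n k t := by
    simp only [kingRegion, mem_filter, mem_univ, true_and, c]
    omega
  have hK : (kingGraph m n).IsClique
      (↑(kingRegion m n k t ∩ (kingGraph m n).closedNeighborFinset c) : Set _) := by
    intro x hx y hy hxy
    simp only [coe_inter, Set.mem_inter_iff, mem_coe, kingRegion, mem_filter, mem_univ, true_and,
      kingGraph_mem_closedNeighborFinset, c] at hx hy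
    rw [kingGraph_adj_iff]
    exact ⟨hxy, by omega⟩
  have hrest : kingRegion m n k t \ (kingGraph m n).closedNeighborFinset c =
      kingRegion m n k (t + 1) := by
    ext v
    simp only [kingRegion, mem_sdiff, mem_filter, mem_univ, true_and,
      kingGraph_mem_closedNeighborFinset, c]
    omega
  rw [signedDomSum_eq_neg_of_isClique hc hK, hrest]

theorem signedDomSum_kingRegion_zero {k t : ℕ} (hk : 1 ≤ k) (hkm : k ≤ m)
    (ht : t ≤ (n + 1) / 2) :
    (kingGraph m n).signedDomSum (kingRegion m n k 0) =
      (-1) ^ t * (kingGraph m n).signedDomSum (kingRegion m n k t) := by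
  induction t with
  | zero => rw [pow_zero, one_mul]
  | succ t ih =>
    rw [ih (by omega), signedDomSum_kingRegion_succ hk hkm (by omega), pow_succ]
    ring

theorem kingRegion_ceil_half (k : ℕ) :
    kingRegion m n k ((n + 1) / 2) = kingRegion m n (k - 2) 0 := by
  ext v
  simp only [kingRegion, mem_filter, mem_univ, true_and]
  omega

theorem kingRegion_self_zero : kingRegion m n m 0 = univ := by
  ext v
  simp only [kingRegion, mem_filter, mem_univ, true_and, iff_true]
  omega

theorem signedDomSum_kingRegion {k : ℕ} (hkm : k ≤ m) :
    (kingGraph m n).signedDomSum (kingRegion m n k 0) =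
      (-1) ^ ((k + 1) / 2 * ((n + 1) / 2)) := by
  induction k using Nat.strong_induction_on with
  | _ k ih =>
    rcases Nat.eq_zero_or_pos k with rfl | hk
    · have hempty : kingRegion m n 0 0 = ∅ := by ext v; simp [kingRegion]
      rw [hempty, signedDomSum_empty]
      simp
    · rw [signedDomSum_kingRegion_zero hk hkm le_rfl, kingRegion_ceil_half,
        ih (k - 2) (by omega) (by omega), ← pow_add,
        show (k + 1) / 2 = (k - 2 + 1) / 2 + 1 by omega, add_one_mul, add_comm]

end KingGraph

/-- The domination polynomial of the `m × n` king graph evaluated at `-1`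
equals `(-1)^(⌈m/2⌉⌈n/2⌉)`. -/
theorem king_domination_poly_at_neg_one (m n : ℕ) :
    ∑ S ∈ Finset.univ.filter (IsDomSet (kingGraph m n)), (-1 : ℤ) ^ S.card =
      (-1 : ℤ) ^ ((m + 1) / 2 * ((n + 1) / 2)) := by
  rw [← SimpleGraph.signedDomSum_univ, ← kingRegion_self_zero, signedDomSum_kingRegion le_rfl]
end

section
/- Let S be a dominating set of the m×n king graph. Partition the board into blocks B_{i,j} = {2i−1, 2i} × {2j−1, 2j} (truncated at the boundary when m or n is odd), ordered lexicographically by (j, i). If in every block the only element of S (if any) is the top-left corner (the unique vertex of the block with both coordinates odd), then every block's top-left corner lies in S; that is, S equals the set of all vertices with both coordinates odd. -/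
/- Board coordinates of a vertex `p` are `(p.1.val + 1, p.2.val + 1)`; thus `p` is
the top-left corner of its `2 × 2` block iff both board coordinates are odd, i.e.
iff `p.1.val` and `p.2.val` are both even. -/

/-! The top-left corners are pairwise at even Chebyshev distance, so they form an independent
set of the king graph; a dominating set inside an independent set must be all of it, since a
missing vertex could only be dominated from within the independent set. -/

theorem IsDomSet.eq_of_subset_of_isIndepSet {V : Type*} {G : SimpleGraph V} {S T : Finset V}
    (hS : IsDomSet G S) (hST : S ⊆ T) (hT : G.IsIndepSet (T : Set V)) : S = T := by
  refine hST.antisymm fun v hv => ?_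
  rcases hS v with hvS | ⟨u, huS, huv⟩
  · exact hvS
  · exact absurd huv (hT (hST huS) hv (G.ne_of_adj huv))

theorem kingGraph_isIndepSet_evenEven (m n : ℕ) :
    (kingGraph m n).IsIndepSet
      (Finset.univ.filter fun p : Fin m × Fin n => Even p.1.val ∧ Even p.2.val) := by
  intro p hp q hq _ hadj
  simp only [Finset.coe_filter, Finset.mem_univ, true_and, Set.mem_ofPred_eq,
    Nat.even_iff] at hp hq
  have hdist := hadj.2
  omega

/-- If a dominating set `S` of the `m × n` king graph contains, in every block, no
element other than the block's top-left corner, then `S` is exactly the set of all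
top-left corners, i.e. all vertices with both board coordinates odd. -/
theorem king_all_corners_of_only_corners (m n : ℕ) (S : Finset (Fin m × Fin n))
    (hS : IsDomSet (kingGraph m n) S)
    (hcorner : ∀ p ∈ S, Even p.1.val ∧ Even p.2.val) :
    S = Finset.univ.filter (fun p : Fin m × Fin n =>
      Even p.1.val ∧ Even p.2.val) :=
  hS.eq_of_subset_of_isIndepSet
    (fun p hp => Finset.mem_filter.mpr ⟨Finset.mem_univ p, hcorner p hp⟩)
    (kingGraph_isIndepSet_evenEven m n)
end

section
/- Let S be a dominating set of the m×n king graph, and let B be a 2×2 block {2i−1,2i}×{2j−1,2j} (possibly truncated at the boundary) such that every earlier block (in the lexicographic order scanning left-to-right then top-to-bottom) contains its top-left corner in S, and B contains some element of S other than its top-left corner v = (2i−1, 2j−1). Then the symmetric difference S △ {v} is also a dominating set. -/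
/- Board coordinates of a vertex `p` are `(p.1.val + 1, p.2.val + 1)`; thus `p` is
the top-left corner of its `2 × 2` block iff both board coordinates are odd, i.e.
iff `p.1.val` and `p.2.val` are both even.  The (0-based) block index of `p` is
`(p.1.val / 2, p.2.val / 2)`, and the scan order (left-to-right, then
top-to-bottom) is lexicographic in `(p.2.val / 2, p.1.val / 2)`. -/

/-! Adding `v` keeps `S` dominating; removing it does too as long as the rest of `S` still
dominates the closed neighbourhood of `v`. A square `u` within king distance one of `v` lies
either in the block of `v`, where the other element of `S` in that block dominates it (any two
squares of a block are equal or adjacent), or, since `v` has even coordinates, in the block to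
the left or above, which comes earlier in the scan order: its corner is in `S` and dominates `u`. -/

namespace IsDomSet

variable {V : Type*} {G : SimpleGraph V} {S : Finset V}

theorem mono {T : Finset V} (hS : IsDomSet G S) (hST : S ⊆ T) : IsDomSet G T := fun u =>
  (hS u).imp (fun hu => hST hu) fun ⟨c, hc, hcu⟩ => ⟨c, hST hc, hcu⟩

theorem erase [DecidableEq V] {v : V} (hS : IsDomSet G S)
    (hv : ∀ u, (u = v ∨ G.Adj v u) → ∃ c ∈ S.erase v, c = u ∨ G.Adj c u) :
    IsDomSet G (S.erase v) := by
  have dominated_of {u : V} : (∃ c ∈ S.erase v, c = u ∨ G.Adj c u) →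
      u ∈ S.erase v ∨ ∃ c ∈ S.erase v, G.Adj c u := by
    rintro ⟨c, hc, rfl | hcu⟩
    exacts [Or.inl hc, Or.inr ⟨c, hc, hcu⟩]
  intro u
  rcases hS u with hu | ⟨t, ht, htu⟩
  · by_cases huv : u = v
    · exact dominated_of (hv u (Or.inl huv))
    · exact Or.inl (Finset.mem_erase.2 ⟨huv, hu⟩)
  · by_cases htv : t = v
    · subst htv
      exact dominated_of (hv u (Or.inr htu))
    · exact Or.inr ⟨t, Finset.mem_erase.2 ⟨htv, ht⟩, htu⟩

end IsDomSet

namespace kingGraph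

variable {m n : ℕ}

def blockCorner (p : Fin m × Fin n) : Fin m × Fin n :=
  (⟨p.1.val / 2 * 2, by omega⟩, ⟨p.2.val / 2 * 2, by omega⟩)

theorem even_blockCorner_fst (p : Fin m × Fin n) : Even (blockCorner p).1.val :=
  even_iff_two_dvd.2 (Dvd.intro_left _ rfl)

theorem even_blockCorner_snd (p : Fin m × Fin n) : Even (blockCorner p).2.val :=
  even_iff_two_dvd.2 (Dvd.intro_left _ rfl)

theorem blockCorner_fst_div_two (p : Fin m × Fin n) :
    (blockCorner p).1.val / 2 = p.1.val / 2 := by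
  simp [blockCorner]

theorem blockCorner_snd_div_two (p : Fin m × Fin n) :
    (blockCorner p).2.val / 2 = p.2.val / 2 := by
  simp [blockCorner]

theorem eq_or_adj_of_div_two_eq {p q : Fin m × Fin n} (h1 : p.1.val / 2 = q.1.val / 2)
    (h2 : p.2.val / 2 = q.2.val / 2) : p = q ∨ (kingGraph m n).Adj p q := by
  by_cases hpq : p = q
  · exact Or.inl hpq
  · have hcoord : p.1.val ≠ q.1.val ∨ p.2.val ≠ q.2.val := by
      contrapose! hpq
      exact Prod.ext (Fin.ext hpq.1) (Fin.ext hpq.2)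
    exact Or.inr ⟨hpq, by omega⟩

theorem div_two_eq_or_before_of_adj {u v : Fin m × Fin n} (hv1 : Even v.1.val)
    (hv2 : Even v.2.val) (huv : u = v ∨ (kingGraph m n).Adj v u) :
    (u.1.val / 2 = v.1.val / 2 ∧ u.2.val / 2 = v.2.val / 2) ∨
      u.2.val / 2 < v.2.val / 2 ∨ (u.2.val / 2 = v.2.val / 2 ∧ u.1.val / 2 < v.1.val / 2) := by
  obtain ⟨r, hr⟩ := hv1
  obtain ⟨s, hs⟩ := hv2
  rcases huv with rfl | ⟨-, hdist⟩
  · exact Or.inl ⟨rfl, rfl⟩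
  · omega

theorem exists_mem_erase_eq_or_adj {S : Finset (Fin m × Fin n)} {u v : Fin m × Fin n}
    (hv1 : Even v.1.val) (hv2 : Even v.2.val)
    (hearlier : ∀ w : Fin m × Fin n, Even w.1.val → Even w.2.val →
      (w.2.val / 2 < v.2.val / 2 ∨
        (w.2.val / 2 = v.2.val / 2 ∧ w.1.val / 2 < v.1.val / 2)) → w ∈ S)
    (hother : ∃ w ∈ S, w ≠ v ∧ w.1.val / 2 = v.1.val / 2 ∧ w.2.val / 2 = v.2.val / 2)
    (huv : u = v ∨ (kingGraph m n).Adj v u) :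
    ∃ c ∈ S.erase v, c = u ∨ (kingGraph m n).Adj c u := by
  rcases div_two_eq_or_before_of_adj hv1 hv2 huv with ⟨hu1, hu2⟩ | hbefore
  · obtain ⟨w, hwS, hwv, hw1, hw2⟩ := hother
    exact ⟨w, Finset.mem_erase.2 ⟨hwv, hwS⟩,
      eq_or_adj_of_div_two_eq (hw1.trans hu1.symm) (hw2.trans hu2.symm)⟩
  · have hc1 := blockCorner_fst_div_two u
    have hc2 := blockCorner_snd_div_two u
    have hcv : blockCorner u ≠ v := by
      rintro rfl
      omega
    have hcS : blockCorner u ∈ S :=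
      hearlier _ (even_blockCorner_fst u) (even_blockCorner_snd u) (by rwa [hc1, hc2])
    exact ⟨blockCorner u, Finset.mem_erase.2 ⟨hcv, hcS⟩, eq_or_adj_of_div_two_eq hc1 hc2⟩

end kingGraph

/-- Let `S` be a dominating set of the `m × n` king graph and let `v` be the
top-left corner of a block `B` such that every strictly earlier block (in the scan
order) has its top-left corner in `S`, while `B` contains some element of `S`
other than `v`.  Then `S ∆ {v}` is also a dominating set. -/
theorem king_flip_dominating (m n : ℕ) (S : Finset (Fin m × Fin n))
    (hS : IsDomSet (kingGraph m n) S)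
    (v : Fin m × Fin n) (hv1 : Even v.1.val) (hv2 : Even v.2.val)
    (hearlier : ∀ w : Fin m × Fin n, Even w.1.val → Even w.2.val →
      (w.2.val / 2 < v.2.val / 2 ∨
        (w.2.val / 2 = v.2.val / 2 ∧ w.1.val / 2 < v.1.val / 2)) → w ∈ S)
    (hother : ∃ w ∈ S, w ≠ v ∧ w.1.val / 2 = v.1.val / 2 ∧ w.2.val / 2 = v.2.val / 2) :
    IsDomSet (kingGraph m n) (symmDiff S {v}) := by
  by_cases hvS : v ∈ S
  · rw [symmDiff_of_ge (Finset.singleton_subset_iff.2 hvS), Finset.sdiff_singleton_eq_erase]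
    exact hS.erase fun u huv =>
      kingGraph.exists_mem_erase_eq_or_adj hv1 hv2 hearlier hother huv
  · exact hS.mono ((le_symmDiff_iff_left _ _).2 (Finset.disjoint_singleton_right.2 hvS))
end

section
/- There exists a fixed-point-free involution on the collection of dominating sets of the m×n king graph other than T (the set of vertices with both coordinates odd) that changes the parity of the set's cardinality. Consequently, the number of dominating sets of even size differs from the number of odd size by exactly 1, the excess being on the side of the parity of ⌈m/2⌉·⌈n/2⌉. -/
open Finset
open scoped symmDiff

theorem isDomSet_iff_exists_eq_or_adj {V : Type*} {G : SimpleGraph V} {S : Finset V} :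
    IsDomSet G S ↔ ∀ v, ∃ u ∈ S, u = v ∨ G.Adj u v := by
  refine forall_congr' fun v => ⟨?_, ?_⟩
  · rintro (hv | ⟨u, hu, huv⟩)
    exacts [⟨v, hv, .inl rfl⟩, ⟨u, hu, .inr huv⟩]
  · rintro ⟨u, hu, rfl | huv⟩
    exacts [.inl hu, .inr ⟨u, hu, huv⟩]

theorem Finset.even_card_symmDiff_singleton_iff {α : Type*} [DecidableEq α] (S : Finset α)
    (a : α) : Even #(S ∆ {a}) ↔ ¬ Even #S := by
  by_cases ha : a ∈ S
  · have hpos : 0 < #S := card_pos.mpr ⟨a, ha⟩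
    have hS : S ∆ {a} = S.erase a := by
      ext; simp only [mem_symmDiff, mem_singleton, mem_erase]; grind
    rw [hS, card_erase_of_mem ha, Nat.even_iff, Nat.even_iff]
    omega
  · have hS : S ∆ {a} = insert a S := by
      ext; simp only [mem_symmDiff, mem_singleton, mem_insert]; grind
    rw [hS, card_insert_of_notMem ha, Nat.even_add_one]

theorem Finset.card_even_sub_card_odd_eq_neg_one_pow {α : Type*} [Fintype α] [DecidableEq α]
    (P : Finset α → Prop) [DecidablePred P] {T : Finset α} (hT : P T)
    (f : Finset α → Finset α)
    (hf : ∀ S, P S → S ≠ T → P (f S) ∧ f S ≠ T ∧ f (f S) = S ∧ f S ≠ S ∧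
      (Even #(f S) ↔ ¬ Even #S)) :
    (#{S | P S ∧ Even #S} : ℤ) - #{S | P S ∧ Odd #S} = (-1) ^ #T := by
  have hsigned :
      ∑ S ∈ {S | P S}, (-1 : ℤ) ^ #S = #{S | P S ∧ Even #S} - #{S | P S ∧ Odd #S} := by
    simp only [neg_one_pow_eq_ite, sum_ite, sum_const, filter_filter, Nat.not_even_iff_odd]
    simp [sub_eq_add_neg]
  have hcancel : ∑ S ∈ ({S | P S} : Finset _).erase T, (-1 : ℤ) ^ #S = 0 := by
    refine sum_involution (fun S _ => f S) ?_ ?_ ?_ ?_ <;>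
      intro S hS <;> rw [mem_erase, mem_filter] at hS <;>
      obtain ⟨hP, hne, hff, hfne, hparity⟩ := hf S hS.2.2 hS.1
    · simp only [neg_one_pow_eq_ite, hparity]
      split_ifs <;> norm_num
    · exact fun _ => hfne
    · simpa [hne] using hP
    · exact hff
  rw [← hsigned, ← add_sum_erase _ _ (by simpa using hT), hcancel, add_zero]

theorem card_filter_range_odd_add_one (m : ℕ) : #{k ∈ range m | Odd (k + 1)} = (m + 1) / 2 := by
  induction m with
  | zero => rfl
  | succ m ih =>
    rw [range_add_one, filter_insert, apply_ite card, ih]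
    split_ifs with h
    · rw [card_insert_of_notMem (by simp), ih]
      obtain ⟨k, hk⟩ := h
      omega
    · obtain ⟨k, hk⟩ := Nat.not_odd_iff_even.mp h
      omega

theorem Fin.card_filter_odd_val_add_one (m : ℕ) :
    #{i : Fin m | Odd (i.val + 1)} = (m + 1) / 2 := by
  rw [← card_filter_range_odd_add_one, ← card_map Fin.valEmbedding, map_filter',
    Fin.map_valEmbedding_univ, Nat.Iio_eq_range]
  simp only [valEmbedding_apply, Fin.exists_iff]
  exact congrArg card (filter_congr fun k hk => by simp [mem_range.mp hk])

namespace KingGraph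

variable {m n : ℕ}

def oddSquares (m n : ℕ) : Finset (Fin m × Fin n) :=
  Finset.univ.filter fun p : Fin m × Fin n => Odd (p.1.val + 1) ∧ Odd (p.2.val + 1)

theorem card_oddSquares (m n : ℕ) : #(oddSquares m n) = (m + 1) / 2 * ((n + 1) / 2) := by
  rw [oddSquares, ← univ_product_univ, filter_product (fun i : Fin m => Odd (i.val + 1))
    (fun j : Fin n => Odd (j.val + 1)), card_product, Fin.card_filter_odd_val_add_one,
    Fin.card_filter_odd_val_add_one]

theorem mem_oddSquares {p : Fin m × Fin n} :
    p ∈ oddSquares m n ↔ p.1.val % 2 = 0 ∧ p.2.val % 2 = 0 := by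
  simp [oddSquares, Nat.odd_add_one, Nat.even_iff]

def Close (u v : Fin m × Fin n) : Prop :=
  u.1.val ≤ v.1.val + 1 ∧ v.1.val ≤ u.1.val + 1 ∧
    u.2.val ≤ v.2.val + 1 ∧ v.2.val ≤ u.2.val + 1

theorem Close.symm {u v : Fin m × Fin n} (h : Close u v) : Close v u := by
  simp only [Close] at h ⊢
  omega

theorem eq_or_adj_iff_close {u v : Fin m × Fin n} :
    u = v ∨ (kingGraph m n).Adj u v ↔ Close u v := by
  simp only [kingGraph, Close, ne_eq, Prod.ext_iff, Fin.ext_iff]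
  omega

theorem isDomSet_iff_close {S : Finset (Fin m × Fin n)} :
    IsDomSet (kingGraph m n) S ↔ ∀ v, ∃ u ∈ S, Close u v := by
  simp only [isDomSet_iff_exists_eq_or_adj, eq_or_adj_iff_close]

def block (p : Fin m × Fin n) : ℕ ×ₗ ℕ := toLex (p.1.val / 2, p.2.val / 2)

def corner (p : Fin m × Fin n) : Fin m × Fin n :=
  (⟨2 * (p.1.val / 2), by omega⟩, ⟨2 * (p.2.val / 2), by omega⟩)

theorem block_eq_iff {u v : Fin m × Fin n} :
    block u = block v ↔ u.1.val / 2 = v.1.val / 2 ∧ u.2.val / 2 = v.2.val / 2 := by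
  simp [block, Prod.ext_iff]

theorem block_le_iff {u v : Fin m × Fin n} :
    block u ≤ block v ↔ u.1.val / 2 < v.1.val / 2 ∨
      u.1.val / 2 = v.1.val / 2 ∧ u.2.val / 2 ≤ v.2.val / 2 :=
  Prod.Lex.toLex_le_toLex

theorem corner_mem_oddSquares (p : Fin m × Fin n) : corner p ∈ oddSquares m n := by
  simp [mem_oddSquares, corner]

theorem block_corner (p : Fin m × Fin n) : block (corner p) = block p := by
  simp only [block_eq_iff, corner]
  omega

theorem corner_eq_of_block_eq {p q : Fin m × Fin n} (h : block p = block q) :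
    corner p = corner q := by
  simp only [block_eq_iff] at h
  simp [corner, h]

theorem close_of_block_eq {u v : Fin m × Fin n} (h : block u = block v) : Close u v := by
  simp only [block_eq_iff] at h
  simp only [Close]
  omega

theorem eq_of_close_of_mem_oddSquares {u v : Fin m × Fin n} (hu : u ∈ oddSquares m n)
    (hv : v ∈ oddSquares m n) (h : Close u v) : u = v := by
  simp only [mem_oddSquares] at hu hv
  simp only [Close] at h
  ext <;> omega

theorem block_le_of_close_mem_oddSquares {c v : Fin m × Fin n} (hc : c ∈ oddSquares m n)
    (h : Close c v) : block v ≤ block c := by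
  simp only [mem_oddSquares] at hc
  simp only [Close] at h
  rw [block_le_iff]
  omega

theorem isDomSet_oddSquares (m n : ℕ) : IsDomSet (kingGraph m n) (oddSquares m n) :=
  isDomSet_iff_close.mpr fun v =>
    ⟨corner v, corner_mem_oddSquares v, close_of_block_eq (block_corner v)⟩

def IsFirstDeviation (S : Finset (Fin m × Fin n)) (p : Fin m × Fin n) : Prop :=
  p ∈ S ∆ oddSquares m n ∧ ∀ q ∈ S ∆ oddSquares m n, block p ≤ block q

variable {S : Finset (Fin m × Fin n)} {p : Fin m × Fin n}

theorem exists_isFirstDeviation (hS : S ≠ oddSquares m n) : ∃ p, IsFirstDeviation S p := by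
  obtain ⟨p, hp, hmin⟩ := exists_min_image _ block (symmDiff_nonempty.mpr hS)
  exact ⟨p, hp, hmin⟩

namespace IsFirstDeviation

theorem block_eq {q : Fin m × Fin n} (hp : IsFirstDeviation S p) (hq : IsFirstDeviation S q) :
    block p = block q :=
  le_antisymm (hp.2 q hq.1) (hq.2 p hp.1)

theorem mem_iff_of_block_lt (hp : IsFirstDeviation S p) {q : Fin m × Fin n}
    (hq : block q < block p) : q ∈ S ↔ q ∈ oddSquares m n := by
  by_contra h
  exact (hq.trans_le (hp.2 q (by rw [mem_symmDiff]; tauto))).false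

theorem exists_mem_notMem_oddSquares (hd : IsDomSet (kingGraph m n) S)
    (hp : IsFirstDeviation S p) : ∃ c ∈ S, c ∉ oddSquares m n ∧ block c = block p := by
  rcases mem_symmDiff.mp hp.1 with ⟨hpS, hpT⟩ | ⟨hpT, hpS⟩
  · exact ⟨p, hpS, hpT, rfl⟩
  obtain ⟨u, huS, hup⟩ := isDomSet_iff_close.mp hd p
  have huT : u ∉ oddSquares m n := fun huT =>
    hpS (eq_of_close_of_mem_oddSquares huT hpT hup ▸ huS)
  exact ⟨u, huS, huT, le_antisymm
    (block_le_of_close_mem_oddSquares hpT hup.symm)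
    (hp.2 u (mem_symmDiff.mpr (Or.inl ⟨huS, huT⟩)))⟩

theorem isDomSet_symmDiff_corner (hd : IsDomSet (kingGraph m n) S)
    (hp : IsFirstDeviation S p) : IsDomSet (kingGraph m n) (S ∆ {corner p}) := by
  obtain ⟨c, hcS, hcT, hcp⟩ := hp.exists_mem_notMem_oddSquares hd
  have mem_of_ne {u} (hu : u ∈ S) (hne : u ≠ corner p) : u ∈ S ∆ {corner p} :=
    mem_symmDiff.mpr (Or.inl ⟨hu, by simpa using hne⟩)
  refine isDomSet_iff_close.mpr fun v => ?_
  obtain ⟨u, huS, huv⟩ := isDomSet_iff_close.mp hd v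
  by_cases hu : u = corner p
  swap
  · exact ⟨u, mem_of_ne huS hu, huv⟩
  subst hu
  have hvp : block v ≤ block p :=
    block_corner p ▸ block_le_of_close_mem_oddSquares (corner_mem_oddSquares p) huv
  rcases hvp.eq_or_lt with hvp | hvp
  · refine ⟨c, mem_of_ne hcS ?_, close_of_block_eq (hcp.trans hvp.symm)⟩
    rintro rfl
    exact hcT (corner_mem_oddSquares p)
  · have hlt : block (corner v) < block p := (block_corner v).symm ▸ hvp
    refine ⟨corner v, mem_of_ne ((hp.mem_iff_of_block_lt hlt).mpr (corner_mem_oddSquares v))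
      fun h => ?_, close_of_block_eq (block_corner v)⟩
    rw [h, block_corner] at hlt
    exact hlt.false

theorem symmDiff_corner {c : Fin m × Fin n} (hp : IsFirstDeviation S p) (hcS : c ∈ S)
    (hcT : c ∉ oddSquares m n) (hcp : block c = block p) :
    IsFirstDeviation (S ∆ {corner p}) c := by
  have hc : c ≠ corner p := fun h => hcT (h ▸ corner_mem_oddSquares p)
  refine ⟨by simp [mem_symmDiff, hcS, hcT, hc], fun q hq => hcp ▸ ?_⟩
  by_cases hqp : q = corner p
  · rw [hqp, block_corner]
  · exact hp.2 q (by simpa [mem_symmDiff, hqp] using hq)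

end IsFirstDeviation

open Classical in
noncomputable def toggle (S : Finset (Fin m × Fin n)) : Finset (Fin m × Fin n) :=
  if h : ∃ p, IsFirstDeviation S p then S ∆ {corner h.choose} else S

theorem IsFirstDeviation.toggle_eq (hp : IsFirstDeviation S p) : toggle S = S ∆ {corner p} := by
  have h : ∃ p, IsFirstDeviation S p := ⟨p, hp⟩
  rw [toggle, dif_pos h, corner_eq_of_block_eq (h.choose_spec.block_eq hp)]

theorem toggle_spec (hd : IsDomSet (kingGraph m n) S) (hS : S ≠ oddSquares m n) :
    IsDomSet (kingGraph m n) (toggle S) ∧ toggle S ≠ oddSquares m n ∧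
      toggle (toggle S) = S ∧ toggle S ≠ S ∧ (Even #(toggle S) ↔ ¬ Even #S) := by
  obtain ⟨p, hp⟩ := exists_isFirstDeviation hS
  obtain ⟨c, hcS, hcT, hcp⟩ := hp.exists_mem_notMem_oddSquares hd
  have hc := hp.symmDiff_corner hcS hcT hcp
  rw [hp.toggle_eq]
  refine ⟨hp.isDomSet_symmDiff_corner hd, fun h => by simpa [h] using hc.1, ?_, ?_,
    S.even_card_symmDiff_singleton_iff _⟩
  · rw [hc.toggle_eq, corner_eq_of_block_eq hcp, symmDiff_symmDiff_cancel_right]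
  · simp [symmDiff_eq_left]

end KingGraph

/-- There is a parity-reversing, fixed-point-free involution on the dominating
sets of the `m × n` king graph other than `T` (the set of all vertices with both
board coordinates odd).  Consequently the numbers of dominating sets of even and
of odd size differ by exactly `1`, the excess lying on the side of the parity of
`⌈m/2⌉ * ⌈n/2⌉`. -/
theorem king_parity_involution (m n : ℕ) :
    (∃ f : Finset (Fin m × Fin n) → Finset (Fin m × Fin n),
      ∀ S, IsDomSet (kingGraph m n) S →
        S ≠ Finset.univ.filter (fun p : Fin m × Fin n =>
          Odd (p.1.val + 1) ∧ Odd (p.2.val + 1)) →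
        IsDomSet (kingGraph m n) (f S) ∧
        f S ≠ Finset.univ.filter (fun p : Fin m × Fin n =>
          Odd (p.1.val + 1) ∧ Odd (p.2.val + 1)) ∧
        f (f S) = S ∧ f S ≠ S ∧ (Even (f S).card ↔ ¬ Even S.card)) ∧
    ((Finset.univ.filter (fun S => IsDomSet (kingGraph m n) S ∧ Even S.card)).card : ℤ) -
      ((Finset.univ.filter (fun S => IsDomSet (kingGraph m n) S ∧ Odd S.card)).card : ℤ) =
      (-1 : ℤ) ^ ((m + 1) / 2 * ((n + 1) / 2)) := by
  refine ⟨⟨KingGraph.toggle, fun _ => KingGraph.toggle_spec⟩, ?_⟩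
  rw [← KingGraph.card_oddSquares]
  exact card_even_sub_card_odd_eq_neg_one_pow _ (KingGraph.isDomSet_oddSquares m n) _
    fun _ => KingGraph.toggle_spec
end

section
/- For any finite graph G with at least one vertex, the domination polynomial P_G(z) = Σ_{S dominating} z^{|S|} satisfies P_G(1) equal to the total number of dominating sets, and P_G(1) is odd. -/
open Finset

theorem Finset.sum_sum_eq_sum_diag_of_symm {ι R : Type*} [DecidableEq ι] [CommRing R]
    [CharP R 2] (s : Finset ι) (f : ι → ι → R) (hf : ∀ i j, f i j = f j i) :
    ∑ i ∈ s, ∑ j ∈ s, f i j = ∑ i ∈ s, f i i := by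
  have offDiag_sum : ∑ p ∈ s.offDiag, f p.1 p.2 = 0 :=
    sum_involution (fun p _ => p.swap) (fun p _ => by simp [hf p.2 p.1, CharTwo.add_self_eq_zero])
      (fun p hp _ => by simpa [Prod.ext_iff, eq_comm] using (mem_offDiag.mp hp).2.2)
      (fun p hp => by simp only [mem_offDiag] at hp ⊢; grind) fun p _ => p.swap_swap
  rw [← sum_product' (f := f), ← diag_union_offDiag, sum_union (disjoint_diag_offDiag _),
    sum_diag, offDiag_sum, add_zero]

section Domination

variable {V : Type*} [Fintype V] [DecidableEq V] (G : SimpleGraph V) [DecidableRel G.Adj]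

def undominated (A : Finset V) : Finset V :=
  univ.filter fun v => ∀ a ∈ A, a ≠ v ∧ ¬G.Adj a v

lemma subset_undominated_comm {A B : Finset V} : B ⊆ undominated G A ↔ A ⊆ undominated G B := by
  simp only [undominated, subset_iff, mem_filter, mem_univ, true_and]
  exact ⟨fun h a ha b hb => ⟨(h hb a ha).1.symm, fun hab => (h hb a ha).2 hab.symm⟩,
    fun h b hb a ha => ⟨(h ha b hb).1.symm, fun hab => (h ha b hb).2 hab.symm⟩⟩

lemma subset_undominated_self {A : Finset V} : A ⊆ undominated G A ↔ A = ∅ := by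
  simp only [undominated, subset_iff, mem_filter, mem_univ, true_and, eq_empty_iff_forall_notMem]
  exact ⟨fun h a ha => (h ha a ha).1 rfl, fun h a ha => (h a ha).elim⟩

lemma undominated_eq_empty_iff {A : Finset V} : undominated G A = ∅ ↔ IsDomSet G A := by
  simp only [undominated, IsDomSet, eq_empty_iff_forall_notMem, mem_filter, mem_univ, true_and,
    not_forall, not_and_or, not_not, ne_eq]
  refine forall_congr' fun v => ⟨?_, ?_⟩
  · rintro ⟨a, ha, rfl | hav⟩
    exacts [.inl ha, .inr ⟨a, ha, hav⟩]
  · rintro (hv | ⟨a, ha, hav⟩)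
    exacts [⟨v, hv, .inl rfl⟩, ⟨a, ha, .inr hav⟩]

theorem card_filter_isDomSet_zmod_two :
    ((univ.filter (IsDomSet G)).card : ZMod 2) = 1 := by
  calc ((univ.filter (IsDomSet G)).card : ZMod 2)
      = ∑ A : Finset V, (2 : ZMod 2) ^ (undominated G A).card := by
        rw [natCast_card_filter]
        refine sum_congr rfl fun A _ => ?_
        simp only [show (2 : ZMod 2) = 0 from rfl, zero_pow_eq, card_eq_zero,
          undominated_eq_empty_iff]
    _ = ∑ A : Finset V, ∑ B : Finset V, if B ⊆ undominated G A then 1 else 0 := by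
        refine sum_congr rfl fun A _ => ?_
        rw [sum_boole, filter_subset_univ, card_powerset, Nat.cast_pow, Nat.cast_ofNat]
    _ = ∑ A : Finset V, if A ⊆ undominated G A then 1 else 0 :=
        sum_sum_eq_sum_diag_of_symm _ _ fun A B => by simp only [subset_undominated_comm]
    _ = 1 := by simp [subset_undominated_self]

theorem card_filter_isDomSet_odd : Odd (univ.filter (IsDomSet G)).card :=
  ZMod.natCast_eq_one_iff_odd.mp (card_filter_isDomSet_zmod_two G)

end Domination

theorem domination_poly_at_one_general {V : Type*} [Fintype V] [DecidableEq V]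
    (G : SimpleGraph V) [DecidableRel G.Adj] :
    (∑ S ∈ Finset.univ.filter (IsDomSet G), (1 : ℤ) ^ S.card =
      (Finset.univ.filter (IsDomSet G)).card) ∧
    Odd (∑ S ∈ Finset.univ.filter (IsDomSet G), (1 : ℤ) ^ S.card) := by
  have eval_one : ∑ S ∈ Finset.univ.filter (IsDomSet G), (1 : ℤ) ^ S.card =
      (Finset.univ.filter (IsDomSet G)).card := by
    simp only [one_pow, sum_const, nsmul_eq_mul, mul_one]
  exact ⟨eval_one, eval_one ▸ Int.odd_coe_nat _ |>.mpr (card_filter_isDomSet_odd G)⟩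

/-- For a finite graph with at least one vertex, the domination polynomial
evaluated at `1` equals the number of dominating sets, and this value is odd. -/
theorem domination_poly_at_one {V : Type*} [Fintype V] [DecidableEq V] [Nonempty V]
    (G : SimpleGraph V) [DecidableRel G.Adj] :
    (∑ S ∈ Finset.univ.filter (IsDomSet G), (1 : ℤ) ^ S.card =
      (Finset.univ.filter (IsDomSet G)).card) ∧
    Odd (∑ S ∈ Finset.univ.filter (IsDomSet G), (1 : ℤ) ^ S.card) :=
  domination_poly_at_one_general G
end

section
/- For the 2×n king graph, the domination polynomial evaluated at -1 equals (-1)^{⌈n/2⌉}. -/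
/-! A set of squares dominates the `2 × n` king graph iff its set of columns dominates the path
`P_n`, and the sets of squares with a given column set `T` contribute `(-1)^|T|` in total, so the
value is `D(P_n, -1)`. Pairing each `T` with `T ∪ {last}` cancels all dominating sets of `P_{n+2}`
except those containing the last vertex but not its neighbour; removing the last vertex maps these
onto the dominating sets of `P_n`, whence `D(P_{n+2}, -1) = -D(P_n, -1)`. -/

open Finset

section AlternatingSums

variable {α β R : Type*} [DecidableEq α] [CommRing R]

theorem sum_powerset_insert_mul_neg_one_pow_of_mem {s : Finset α} {a : α} (ha : a ∈ s)
    (g : Finset α → R) : ∑ T ∈ s.powerset, g (insert a T) * (-1) ^ #T = 0 := by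
  rw [← insert_erase ha, sum_powerset_insert (notMem_erase a s), ← sum_add_distrib]
  refine sum_eq_zero fun T hT => ?_
  have haT : a ∉ T := fun h => notMem_erase a s (mem_powerset.1 hT h)
  rw [insert_idem, card_insert_of_notMem haT, pow_succ]
  ring

theorem sum_powerset_image_mul_neg_one_pow [DecidableEq β] (f : β → α) (t : Finset β)
    (g : Finset α → R) :
    ∑ S ∈ t.powerset, g (S.image f) * (-1) ^ #S =
      ∑ T ∈ (t.image f).powerset, g T * (-1) ^ #T := by
  induction t using Finset.induction_on generalizing g with
  | empty => simp
  | insert b t hb ih =>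
    have hinsert : ∑ S ∈ t.powerset, g ((insert b S).image f) * (-1) ^ #(insert b S) =
        -∑ T ∈ (t.image f).powerset, g (insert (f b) T) * (-1) ^ #T := by
      rw [← ih, ← sum_neg_distrib]
      refine sum_congr rfl fun S hS => ?_
      rw [image_insert, card_insert_of_notMem fun h => hb (mem_powerset.1 hS h), pow_succ]
      ring
    rw [sum_powerset_insert hb, hinsert, ih, image_insert]
    by_cases hfb : f b ∈ t.image f
    · rw [insert_eq_of_mem hfb, sum_powerset_insert_mul_neg_one_pow_of_mem hfb, neg_zero, add_zero]
    · rw [sum_powerset_insert hfb, ← sum_neg_distrib]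
      congr 1
      refine sum_congr rfl fun T hT => ?_
      rw [card_insert_of_notMem fun h => hfb (mem_powerset.1 hT h), pow_succ]
      ring

theorem sum_powerset_insert_filter_neg_one_pow {s : Finset α} {v : α} (hv : v ∉ s)
    (P : Finset α → Prop) [DecidablePred P] (hP : ∀ T, P T → P (insert v T)) :
    ∑ T ∈ (insert v s).powerset with P T, (-1 : R) ^ #T =
      -∑ T ∈ s.powerset with P (insert v T) ∧ ¬ P T, (-1 : R) ^ #T := by
  rw [sum_filter, sum_filter, sum_powerset_insert hv, ← sum_neg_distrib, ← sum_add_distrib]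
  refine sum_congr rfl fun T hT => ?_
  rw [card_insert_of_notMem fun h => hv (mem_powerset.1 hT h), pow_succ]
  by_cases hT : P T
  · simp [hT, hP T hT]
  · by_cases hvT : P (insert v T) <;> simp [hT, hvT]

end AlternatingSums

def DominatesPath (n : ℕ) (T : Finset ℕ) : Prop :=
  ∀ j < n, ∃ k ∈ T, k ≤ j + 1 ∧ j ≤ k + 1

instance (n : ℕ) : DecidablePred (DominatesPath n) :=
  fun _ => inferInstanceAs (Decidable (∀ _, _))

theorem DominatesPath.insert {n : ℕ} {T : Finset ℕ} (h : DominatesPath n T) (v : ℕ) :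
    DominatesPath n (insert v T) := fun j hj =>
  let ⟨k, hk, hkj⟩ := h j hj
  ⟨k, mem_insert_of_mem hk, hkj⟩

theorem dominatesPath_insert_and_not_iff {n : ℕ} {T : Finset ℕ} (hT : T ⊆ range (n + 1)) :
    DominatesPath (n + 2) (insert (n + 1) T) ∧ ¬ DominatesPath (n + 2) T ↔
      n ∉ T ∧ DominatesPath n T := by
  have hlt : ∀ k ∈ T, k ≤ n := fun k hk => Nat.lt_succ_iff.1 (mem_range.1 (hT hk))
  constructor
  · rintro ⟨hins, hT⟩
    have hdom : DominatesPath n T := fun j hj => by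
      obtain ⟨k, hk, hkj⟩ := hins j (by omega)
      rcases mem_insert.1 hk with rfl | hk
      · omega
      · exact ⟨k, hk, hkj⟩
    refine ⟨fun hn => hT fun j hj => ?_, hdom⟩
    by_cases hjn : j < n
    · obtain ⟨k, hk, hkj⟩ := hdom j hjn
      exact ⟨k, hk, hkj⟩
    · exact ⟨n, hn, by omega, by omega⟩
  · rintro ⟨hn, hdom⟩
    refine ⟨fun j hj => ?_, fun h => ?_⟩
    · by_cases hjn : j < n
      · obtain ⟨k, hk, hkj⟩ := hdom j hjn
        exact ⟨k, mem_insert_of_mem hk, hkj⟩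
      · exact ⟨n + 1, mem_insert_self _ _, by omega, by omega⟩
    · obtain ⟨k, hk, hkj⟩ := h (n + 1) (by omega)
      have : k = n := by have := hlt k hk; omega
      exact hn (this ▸ hk)

theorem sum_dominatesPath_add_two (n : ℕ) :
    ∑ T ∈ (range (n + 2)).powerset with DominatesPath (n + 2) T, (-1 : ℤ) ^ #T =
      -∑ T ∈ (range n).powerset with DominatesPath n T, (-1 : ℤ) ^ #T := by
  rw [range_add_one, sum_powerset_insert_filter_neg_one_pow notMem_range_self _
    fun T h => h.insert (n + 1)]
  rw [filter_congr fun T (hT : T ∈ (range (n + 1)).powerset) =>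
      dominatesPath_insert_and_not_iff (mem_powerset.1 hT),
    range_add_one, sum_filter, sum_filter, sum_powerset_insert notMem_range_self]
  simp only [mem_insert_self, not_true_eq_false, false_and, if_false, sum_const_zero, add_zero]
  refine congrArg Neg.neg (sum_congr rfl fun T hT => ?_)
  have hn : n ∉ T := fun h => notMem_range_self (mem_powerset.1 hT h)
  simp only [hn, not_false_eq_true, true_and]

theorem sum_dominatesPath_neg_one_pow (n : ℕ) :
    ∑ T ∈ (range n).powerset with DominatesPath n T, (-1 : ℤ) ^ #T =
      (-1) ^ ((n + 1) / 2) := by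
  induction n using Nat.twoStepInduction with
  | zero => decide
  | one => decide
  | more n ih _ =>
    rw [sum_dominatesPath_add_two, ih, show (n + 2 + 1) / 2 = (n + 1) / 2 + 1 by omega, pow_succ,
      mul_neg_one]

theorem isDomSet_kingGraph_two_iff {n : ℕ} (S : Finset (Fin 2 × Fin n)) :
    IsDomSet (kingGraph 2 n) S ↔ DominatesPath n (S.image fun p => (p.2 : ℕ)) := by
  simp only [DominatesPath, mem_image, exists_exists_and_eq_and]
  constructor
  · intro h j hj
    rcases h (0, ⟨j, hj⟩) with hmem | ⟨u, hu, -, hmax⟩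
    · exact ⟨_, hmem, by simp, by simp⟩
    · simp only at hmax
      exact ⟨u, hu, by omega, by omega⟩
  · rintro h ⟨i, j⟩
    obtain ⟨p, hp, hpj⟩ := h j j.isLt
    by_cases hpv : p = (i, j)
    · exact .inl (hpv ▸ hp)
    · refine .inr ⟨p, hp, hpv, ?_⟩
      have : p.1.val ≠ i.val ∨ p.2.val ≠ j.val := by
        by_contra! h; exact hpv (Prod.ext (Fin.ext h.1) (Fin.ext h.2))
      have := p.1.isLt; have := i.isLt
      dsimp only
      omega

/-- For the `2 × n` king graph, the domination polynomial at `-1` is `(-1)^⌈n/2⌉`. -/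
theorem king_two_n_domination_poly_at_neg_one (n : ℕ) :
    ∑ S ∈ Finset.univ.filter (IsDomSet (kingGraph 2 n)), (-1 : ℤ) ^ S.card =
      (-1 : ℤ) ^ ((n + 1) / 2) := by
  have hcolumns : (univ : Finset (Fin 2 × Fin n)).image (fun p => (p.2 : ℕ)) = range n := by
    ext j; simp [Fin.exists_iff]
  have hpushforward :=
    sum_powerset_image_mul_neg_one_pow (fun p : Fin 2 × Fin n => (p.2 : ℕ)) univ
      (fun T => if DominatesPath n T then (1 : ℤ) else 0)
  simp only [boole_mul, ← sum_filter, hcolumns, powerset_univ] at hpushforward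
  rw [filter_congr fun S _ => isDomSet_kingGraph_two_iff S, hpushforward,
    sum_dominatesPath_neg_one_pow]
end

section
/- The minimum size of a dominating set of the m×n king graph is ⌈m/3⌉·⌈n/3⌉. -/
/-!
Cut each side of the board into blocks of three consecutive rows (columns), the last block
possibly shorter; there are `⌈m/3⌉ = (m + 2) / 3` of them. A king on the middle square of each
block pair (moved inward at a short last block) dominates the whole block, giving the upper bound.
Conversely the corner squares `(3i, 3j)` are pairwise at Chebyshev distance at least three, so
their closed neighbourhoods are disjoint and each of them needs its own king.
-/

open Finset

theorem IsDomSet.card_le_of_closedNbhd_disjoint {V ι : Type*} [Fintype ι] {G : SimpleGraph V}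
    {S : Finset V} (hS : IsDomSet G S) (f : ι → V)
    (hf : ∀ i j u, (u = f i ∨ G.Adj u (f i)) → (u = f j ∨ G.Adj u (f j)) → i = j) :
    Fintype.card ι ≤ #S := by
  have hdom : ∀ i, ∃ u ∈ S, u = f i ∨ G.Adj u (f i) := fun i => by
    rcases hS (f i) with h | ⟨u, hu, hadj⟩
    exacts [⟨f i, h, .inl rfl⟩, ⟨u, hu, .inr hadj⟩]
  choose g hgS hg using hdom
  rw [← card_univ]
  exact card_le_card_of_injOn g (fun i _ => hgS i)
    (fun i _ j _ hij => hf i j (g i) (hg i) (hij ▸ hg j))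

theorem kingGraph_eq_or_adj_iff {m n : ℕ} (u v : Fin m × Fin n) :
    u = v ∨ (kingGraph m n).Adj u v ↔
      ((u.1 : ℤ) - v.1).natAbs ≤ 1 ∧ ((u.2 : ℤ) - v.2).natAbs ≤ 1 := by
  obtain ⟨⟨a, ha⟩, ⟨b, hb⟩⟩ := u
  obtain ⟨⟨c, hc⟩, ⟨d, hd⟩⟩ := v
  simp only [kingGraph, ne_eq, Prod.mk.injEq, Fin.mk.injEq]
  omega

section Blocks

variable (m : ℕ)

def blockCenter (i : Fin ((m + 2) / 3)) : Fin m :=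
  ⟨min (3 * i + 1) (m - 1), by omega⟩

def blockStart (i : Fin ((m + 2) / 3)) : Fin m :=
  ⟨3 * i, by omega⟩

theorem blockCenter_injective : Function.Injective (blockCenter m) := by
  intro i j h
  have := congrArg Fin.val h
  simp only [blockCenter] at this
  omega

theorem exists_natAbs_sub_blockCenter_le_one (x : Fin m) :
    ∃ i, ((blockCenter m i : ℤ) - x).natAbs ≤ 1 :=
  ⟨⟨x / 3, by omega⟩, by simp only [blockCenter]; omega⟩

variable {m}

theorem eq_of_natAbs_sub_blockStart_le_one {x : Fin m} {i j : Fin ((m + 2) / 3)}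
    (hi : ((x : ℤ) - blockStart m i).natAbs ≤ 1) (hj : ((x : ℤ) - blockStart m j).natAbs ≤ 1) :
    i = j := by
  simp only [blockStart] at hi hj
  omega

end Blocks

theorem isDomSet_kingGraph_blockCenters (m n : ℕ) :
    IsDomSet (kingGraph m n) (univ.image (Prod.map (blockCenter m) (blockCenter n))) := by
  intro v
  obtain ⟨i, hi⟩ := exists_natAbs_sub_blockCenter_le_one m v.1
  obtain ⟨j, hj⟩ := exists_natAbs_sub_blockCenter_le_one n v.2
  have hmem : (blockCenter m i, blockCenter n j) ∈
      univ.image (Prod.map (blockCenter m) (blockCenter n)) :=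
    mem_image_of_mem _ (mem_univ (i, j))
  have hnear : (blockCenter m i, blockCenter n j) = v ∨
      (kingGraph m n).Adj (blockCenter m i, blockCenter n j) v := by
    rw [kingGraph_eq_or_adj_iff]
    exact ⟨hi, hj⟩
  rcases hnear with h | h
  exacts [.inl (h ▸ hmem), .inr ⟨_, hmem, h⟩]

/-- The minimum size of a dominating set of the `m × n` king graph is
`⌈m/3⌉ * ⌈n/3⌉`. -/
theorem king_domination_number (m n : ℕ) :
    IsLeast {k : ℕ | ∃ S : Finset (Fin m × Fin n),
      IsDomSet (kingGraph m n) S ∧ S.card = k} ((m + 2) / 3 * ((n + 2) / 3)) := by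
  refine ⟨⟨_, isDomSet_kingGraph_blockCenters m n, ?_⟩, ?_⟩
  · rw [card_image_of_injective _
      ((blockCenter_injective m).prodMap (blockCenter_injective n))]
    simp
  · rintro _ ⟨S, hS, rfl⟩
    have hpacking := hS.card_le_of_closedNbhd_disjoint (Prod.map (blockStart m) (blockStart n))
      fun i j u hi hj => by
        rw [kingGraph_eq_or_adj_iff] at hi hj
        exact Prod.ext (eq_of_natAbs_sub_blockStart_le_one hi.1 hj.1)
          (eq_of_natAbs_sub_blockStart_le_one hi.2 hj.2)
    simpa using hpacking
end
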